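/- Let A = [[a,b],[c,d]] ∈ SL(2,ℤ) with |a+d| > 2, and let v ∈ ℚ ∪ {∞} be such that v and A·v are Farey-adjacent. Then the points Aⁿ·v for n ∈ ℤ are pairwise distinct, and for every integer n the points Aⁿ·v and Aⁿ⁺¹·v are Farey-adjacent. -/

import Mathlib

open OnePoint Matrix

/-- `SL(2,ℤ)`. -/
abbrev SL2Z := Matrix.SpecialLinearGroup (Fin 2) ℤ

/-- The Möbius action of `SL(2,ℤ)` on the rational projective line `ℚ ∪ {∞}`:
the matrix `[[a,b],[c,d]]` sends `x` to `(ax+b)/(cx+d)` (and `∞ = 1/0`). -/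
def mob (A : SL2Z) : OnePoint ℚ → OnePoint ℚ
  | OnePoint.infty =>
      if (A.1 1 0 : ℚ) = 0 then OnePoint.infty
      else OnePoint.some ((A.1 0 0 : ℚ) / (A.1 1 0 : ℚ))
  | OnePoint.some x =>
      if (A.1 1 0 : ℚ) * x + (A.1 1 1 : ℚ) = 0 then OnePoint.infty
      else OnePoint.some (((A.1 0 0 : ℚ) * x + (A.1 0 1 : ℚ)) /
        ((A.1 1 0 : ℚ) * x + (A.1 1 1 : ℚ)))

/-- Farey adjacency on `ℚ ∪ {∞}`: the reduced fractions `p/q` and `r/s`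
are adjacent iff `|ps - qr| = 1`, where `∞ = 1/0`.  (Rationals in Lean are
stored in lowest terms with positive denominator.) -/
def fareyAdj : OnePoint ℚ → OnePoint ℚ → Prop
  | OnePoint.infty, OnePoint.infty => False
  | OnePoint.infty, OnePoint.some x => x.den = 1
  | OnePoint.some x, OnePoint.infty => x.den = 1
  | OnePoint.some x, OnePoint.some y => |x.num * (y.den : ℤ) - (x.den : ℤ) * y.num| = 1

/-!
A point of `ℚ ∪ {∞}` is represented by its primitive integer vector `w`, which `A` moves to `±A w`,
and Farey adjacency of two points reads `|w ∧ u| = 1`; since `SL(2, ℤ)` preserves `∧`, consecutive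
orbit points stay adjacent. For distinctness, the integers `dₙ = w ∧ Aⁿ w` satisfy
`dₙ₊₂ = t dₙ₊₁ - dₙ` with `t = tr A` (Cayley–Hamilton), `d₀ = 0` and `|d₁| = 1`, so `|dₙ|` is
strictly increasing once `|t| ≥ 2`. A point fixed by `Aⁿ` would give `dₙ = 0`.
-/

section Wedge

variable {R : Type*} [CommRing R]

def wedge (w u : Fin 2 → R) : R := w 0 * u 1 - w 1 * u 0

@[simp] lemma wedge_self (w : Fin 2 → R) : wedge w w = 0 := by
  rw [wedge, mul_comm, sub_self]

@[simp] lemma wedge_neg_left (w u : Fin 2 → R) : wedge (-w) u = -wedge w u := by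
  simp only [wedge, Pi.neg_apply]; ring

@[simp] lemma wedge_neg_right (w u : Fin 2 → R) : wedge w (-u) = -wedge w u := by
  simp only [wedge, Pi.neg_apply]; ring

@[simp] lemma wedge_mulVec (A : SpecialLinearGroup (Fin 2) R) (w u : Fin 2 → R) :
    wedge (A.1 *ᵥ w) (A.1 *ᵥ u) = wedge w u := by
  have hdet := A.det_coe
  rw [det_fin_two] at hdet
  simp only [wedge, mulVec_fin_two, cons_val_zero, cons_val_one]
  linear_combination (w 0 * u 1 - w 1 * u 0) * hdet

lemma wedge_eq_zero_iff {w u : Fin 2 → R} (hw : IsCoprime (w 0) (w 1)) :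
    wedge w u = 0 ↔ ∃ k : R, u = k • w := by
  refine ⟨fun h ↦ ?_, ?_⟩
  · obtain ⟨a, b, hab⟩ := hw
    refine ⟨a * u 0 + b * u 1, funext fun i ↦ ?_⟩
    simp only [wedge] at h
    fin_cases i <;> simp only [Pi.smul_apply, smul_eq_mul, Fin.zero_eta, Fin.mk_one]
    · linear_combination (-u 0) * hab - b * h
    · linear_combination (-u 1) * hab + a * h
  · rintro ⟨k, rfl⟩
    simp only [wedge, Pi.smul_apply, smul_eq_mul]; ring

/-- Cayley–Hamilton for `SL(2, R)`: `A² = (tr A) A - 1`. -/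
lemma Matrix.SpecialLinearGroup.pow_add_two_mulVec (A : SpecialLinearGroup (Fin 2) R) (n : ℕ)
    (u : Fin 2 → R) :
    (A ^ (n + 2)).1 *ᵥ u = A.1.trace • ((A ^ (n + 1)).1 *ᵥ u) - (A ^ n).1 *ᵥ u := by
  have hdet := A.det_coe
  rw [det_fin_two] at hdet
  rw [pow_succ' A (n + 1), pow_succ' A n, SpecialLinearGroup.coe_mul, SpecialLinearGroup.coe_mul,
    ← mulVec_mulVec, ← mulVec_mulVec]
  generalize (A ^ n).1 *ᵥ u = u
  ext i
  fin_cases i <;> simp only [mulVec_fin_two, Fin.zero_eta, Fin.mk_one, cons_val_zero,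
    cons_val_one, trace_fin_two, smul_cons, smul_eq_mul, smul_empty, Pi.sub_apply]
  · linear_combination (-u 0) * hdet
  · linear_combination (-u 1) * hdet

end Wedge

lemma Int.eq_or_eq_neg_of_wedge_eq_zero {w u : Fin 2 → ℤ} (hw : IsCoprime (w 0) (w 1))
    (hu : IsCoprime (u 0) (u 1)) (h : wedge w u = 0) : u = w ∨ u = -w := by
  obtain ⟨k, rfl⟩ := (wedge_eq_zero_iff hw).mp h
  have hk : IsUnit k := by
    simp only [Pi.smul_apply, smul_eq_mul] at hu
    exact isCoprime_self.mp hu.of_mul_left_left.of_mul_right_left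
  rcases Int.isUnit_iff.mp hk with rfl | rfl <;> simp

theorem strictMono_abs_of_recurrence {R : Type*} [CommRing R] [LinearOrder R]
    [IsStrictOrderedRing R] {t : R} (ht : 2 ≤ |t|) {d : ℕ → R}
    (hd : ∀ n, d (n + 2) = t * d (n + 1) - d n) (h01 : |d 0| < |d 1|) :
    StrictMono fun n ↦ |d n| := by
  refine strictMono_nat_of_lt_succ fun n ↦ ?_
  induction n with
  | zero => exact h01
  | succ n ih =>
    calc |d (n + 1)| < 2 * |d (n + 1)| - |d n| := by linarith
      _ ≤ |t| * |d (n + 1)| - |d n| := by gcongr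
      _ = |t * d (n + 1)| - |d n| := by rw [abs_mul]
      _ ≤ |d (n + 2)| := by rw [hd]; exact abs_sub_abs_le_abs_sub _ _

theorem MulAction.injective_zpow_smul_of_pow_smul_ne {G α : Type*} [Group G] [MulAction G α]
    {g : G} {a : α} (h : ∀ k : ℕ, 0 < k → g ^ k • a ≠ a) :
    Function.Injective fun n : ℤ ↦ g ^ n • a := by
  have hp : period g a = 0 := by
    by_contra hp
    exact h _ (Nat.pos_of_ne_zero hp) (pow_period_smul g a)
  intro m n hmn
  have : g ^ (-n + m) • a = a := by
    simp only at hmn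
    rw [_root_.zpow_add, mul_smul, hmn, ← mul_smul, ← _root_.zpow_add, neg_add_cancel,
      zpow_zero, one_smul]
  simpa [hp, neg_add_eq_zero, eq_comm] using zpow_smul_eq_iff_period_dvd.mp this

def primVec : OnePoint ℚ → Fin 2 → ℤ
  | ∞ => ![1, 0]
  | (q : ℚ) => ![q.num, q.den]

def ofVec (u : Fin 2 → ℤ) : OnePoint ℚ :=
  if u 1 = 0 then ∞ else ((u 0 / u 1 : ℚ) : OnePoint ℚ)

lemma isCoprime_primVec (x : OnePoint ℚ) : IsCoprime (primVec x 0) (primVec x 1) := by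
  cases x with
  | infty => exact isCoprime_one_left
  | coe q => exact Int.isCoprime_iff_nat_coprime.mpr (by simpa [primVec] using q.reduced)

lemma wedge_primVec_ofVec (u : Fin 2 → ℤ) : wedge (primVec (ofVec u)) u = 0 := by
  by_cases hu : u 1 = 0
  · simp [ofVec, primVec, wedge, hu]
  · simp only [ofVec, if_neg hu, primVec, wedge, cons_val_zero, cons_val_one]
    have h := Rat.num_div_den ((u 0 : ℚ) / u 1)
    rw [div_eq_div_iff (by positivity) (by exact_mod_cast hu)] at h
    rw [sub_eq_zero, mul_comm (_ : ℤ) (u 0)]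
    exact_mod_cast h

lemma mob_eq_ofVec (A : SL2Z) (x : OnePoint ℚ) : mob A x = ofVec (A.1 *ᵥ primVec x) := by
  cases x with
  | infty => by_cases hc : A.1 1 0 = 0 <;> simp [mob, ofVec, primVec, hc]
  | coe q =>
    have hden : (q.den : ℚ) ≠ 0 := by positivity
    have scale (r s : ℤ) : ((r * q.num + s * q.den : ℤ) : ℚ) = (r * q + s) * q.den := by
      push_cast
      linear_combination (-r : ℚ) * Rat.mul_den_eq_num q
    simp only [mob, ofVec, primVec, mulVec_fin_two, cons_val_zero, cons_val_one,
      ← Int.cast_inj (α := ℚ), scale, Int.cast_zero, mul_eq_zero, hden, or_false,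
      mul_div_mul_right _ _ hden]

lemma primVec_mob (A : SL2Z) (x : OnePoint ℚ) :
    primVec (mob A x) = A.1 *ᵥ primVec x ∨ primVec (mob A x) = -(A.1 *ᵥ primVec x) := by
  have hu := (isCoprime_primVec x).mulVecSL A
  rw [mob_eq_ofVec]
  rcases Int.eq_or_eq_neg_of_wedge_eq_zero (isCoprime_primVec _) hu (wedge_primVec_ofVec _)
    with h | h
  · exact .inl h.symm
  · exact .inr (neg_eq_iff_eq_neg.mp h.symm)

lemma abs_wedge_primVec_mob (u : Fin 2 → ℤ) (A : SL2Z) (x : OnePoint ℚ) :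
    |wedge u (primVec (mob A x))| = |wedge u (A.1 *ᵥ primVec x)| := by
  rcases primVec_mob A x with h | h <;> simp only [h, wedge_neg_right, abs_neg]

lemma fareyAdj_iff_abs_wedge (x y : OnePoint ℚ) :
    fareyAdj x y ↔ |wedge (primVec x) (primVec y)| = 1 := by
  cases x <;> cases y <;> simp [fareyAdj, primVec, wedge]

lemma fareyAdj_mob (A : SL2Z) {x y : OnePoint ℚ} (h : fareyAdj x y) :
    fareyAdj (mob A x) (mob A y) := by
  rw [fareyAdj_iff_abs_wedge] at h ⊢
  rcases primVec_mob A x with hx | hx <;> rcases primVec_mob A y with hy | hy <;>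
    simpa only [hx, hy, wedge_neg_left, wedge_neg_right, abs_neg, wedge_mulVec]

lemma mob_eq_smul (A : SL2Z) (x : OnePoint ℚ) : mob A x = SpecialLinearGroup.mapGL ℚ A • x := by
  cases x with
  | infty => simp [mob, OnePoint.smul_infty_eq_ite]
  | coe q => simp [mob, OnePoint.smul_some_eq_ite]

lemma mob_mul (A B : SL2Z) (x : OnePoint ℚ) : mob (A * B) x = mob A (mob B x) := by
  simp only [mob_eq_smul, map_mul, mul_smul]

lemma mob_pow_ne_self {A : SL2Z} (hA : 2 ≤ |A.1.trace|) {v : OnePoint ℚ}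
    (hv : fareyAdj v (mob A v)) {k : ℕ} (hk : 0 < k) : mob (A ^ k) v ≠ v := by
  set w := primVec v
  set d : ℕ → ℤ := fun n ↦ wedge w ((A ^ n).1 *ᵥ w) with hd_def
  have hd (n : ℕ) : d (n + 2) = A.1.trace * d (n + 1) - d n := by
    simp only [hd_def, A.pow_add_two_mulVec, wedge, Pi.sub_apply, Pi.smul_apply, smul_eq_mul]
    ring
  have h0 : d 0 = 0 := by
    simp [hd_def, -mulVec_fin_two]
  have h1 : |d 1| = 1 := by
    rw [fareyAdj_iff_abs_wedge, abs_wedge_primVec_mob] at hv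
    simpa only [hd_def, pow_one] using hv
  intro hfix
  have hdk : d k = 0 := by
    rw [← abs_eq_zero, hd_def, ← abs_wedge_primVec_mob, hfix, wedge_self, abs_zero]
  have := strictMono_abs_of_recurrence hA hd (by rw [h0, h1, abs_zero]; exact one_pos) hk
  simp only [h0, hdk, lt_self_iff_false] at this

theorem orbit_distinct_and_adjacent (A : SL2Z)
    (hyp : |A.1 0 0 + A.1 1 1| > 2)
    (v : OnePoint ℚ) (hv : fareyAdj v (mob A v)) :
    (∀ m n : ℤ, m ≠ n → mob (A ^ m) v ≠ mob (A ^ n) v) ∧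
    (∀ n : ℤ, fareyAdj (mob (A ^ n) v) (mob (A ^ (n + 1)) v)) := by
  have htr : 2 ≤ |A.1.trace| := by rw [trace_fin_two]; exact hyp.le
  refine ⟨fun m n hmn ↦ ?_, fun n ↦ ?_⟩
  · have hinj := MulAction.injective_zpow_smul_of_pow_smul_ne (g := SpecialLinearGroup.mapGL ℚ A)
      (a := v) fun k hk ↦ by
        rw [← map_pow, ← mob_eq_smul]
        exact mob_pow_ne_self htr hv hk
    simpa only [mob_eq_smul, map_zpow] using hinj.ne hmn
  · rw [_root_.zpow_add_one, mob_mul]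
    exact fareyAdj_mob _ hv
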